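/- In a complete convex geometric graph of even order n, every almost-halving edge intersects every halving pair of edges. -/

import Mathlib

open scoped Classical

abbrev Pt : Type := ℝ × ℝ

/-- No three distinct points of `S` are collinear. -/
def GenPos (S : Finset Pt) : Prop :=
  ∀ p ∈ S, ∀ q ∈ S, ∀ r ∈ S, p ≠ q → q ≠ r → p ≠ r → ¬ Collinear ℝ ({p, q, r} : Set Pt)

/-- The closed straight-line segment of an (unordered) edge. -/
noncomputable def seg2 : Sym2 Pt → Set Pt :=
  Sym2.lift ⟨fun p q => segment ℝ p q, fun p q => segment_symm ℝ p q⟩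

/-- Two edges intersect: they share a point (common endpoint or crossing). -/
def SInter (e f : Sym2 Pt) : Prop := (seg2 e ∩ seg2 f).Nonempty

/-- A geometric graph: vertices in general position, straight-line edges. -/
structure GeomGraph where
  verts : Finset Pt
  edges : Finset (Sym2 Pt)
  genpos : GenPos verts
  edge_mem : ∀ e ∈ edges, ∀ p ∈ e, p ∈ verts
  edge_ne : ∀ e ∈ edges, ¬ e.IsDiag

/-- A coloring is complete on edge set `E` if every pair of used colors appears
on a pair of intersecting edges. -/
def CompleteOn (E : Finset (Sym2 Pt)) (c : Sym2 Pt → ℕ) : Prop :=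
  ∀ i ∈ E.image c, ∀ j ∈ E.image c, i ≠ j →
    ∃ e ∈ E, ∃ f ∈ E, c e = i ∧ c f = j ∧ SInter e f

/-- A coloring is proper if same-colored edges are disjoint. -/
def ProperOn (E : Finset (Sym2 Pt)) (c : Sym2 Pt → ℕ) : Prop :=
  ∀ e ∈ E, ∀ f ∈ E, e ≠ f → c e = c f → ¬ SInter e f

/-- Points in convex position. -/
def ConvexPos (S : Finset Pt) : Prop :=
  ∀ p ∈ S, p ∉ convexHull ℝ ((S : Set Pt) \ {p})

/-- Edge set of the complete geometric graph on `S`. -/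
noncomputable def edgeSet (S : Finset Pt) : Finset (Sym2 Pt) :=
  S.sym2.filter (fun e => ¬ e.IsDiag)

def ShareEndpoint (e f : Sym2 Pt) : Prop := ∃ p : Pt, p ∈ e ∧ p ∈ f

def Crossing (e f : Sym2 Pt) : Prop := SInter e f ∧ ¬ ShareEndpoint e f

/-- Number of unordered pairs of distinct edges of `E` satisfying the
(symmetric) relation `P`. -/
noncomputable def pairCount (E : Finset (Sym2 Pt)) (P : Sym2 Pt → Sym2 Pt → Prop) : ℕ :=
  ((E ×ˢ E).filter (fun q => q.1 ≠ q.2 ∧ P q.1 q.2)).card / 2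

/-- The `k`-th vertex (clockwise) of the regular `n`-gon. -/
noncomputable def pt (n k : ℕ) : Pt :=
  (Real.cos (2 * Real.pi * k / n), -Real.sin (2 * Real.pi * k / n))

/-- Vertex set of the regular `n`-gon. -/
noncomputable def ngon (n : ℕ) : Finset Pt := (Finset.range n).image (pt n)

/-- `pq` is a halving edge of `S`: each open half-plane bounded by the line
through `p` and `q` contains at least `⌊(n-2)/2⌋` points of `S`. -/
def IsHalvingPts (S : Finset Pt) (p q : Pt) : Prop :=
  (S.card - 2) / 2 ≤ (S.filter (fun r =>
      0 < (q.1 - p.1) * (r.2 - p.2) - (q.2 - p.2) * (r.1 - p.1))).card ∧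
  (S.card - 2) / 2 ≤ (S.filter (fun r =>
      (q.1 - p.1) * (r.2 - p.2) - (q.2 - p.2) * (r.1 - p.1) < 0)).card

/-- The edge `e_{i,j}` of the regular `n`-gon is halving. -/
def Halving (n i j : ℕ) : Prop := IsHalvingPts (ngon n) (pt n i) (pt n j)

/-- The edges `e_{i,j}` and `e_{i',j'}` of the regular `n`-gon intersect. -/
def EInter (n i j i' j' : ℕ) : Prop :=
  (segment ℝ (pt n i) (pt n j) ∩ segment ℝ (pt n i') (pt n j')).Nonempty

/-- `(e_{i,j}, e_{j+1,k})` is a halving pair. -/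
def HalvingPair (n i j k : ℕ) : Prop :=
  pt n i ≠ pt n j ∧ pt n (j + 1) ≠ pt n k ∧ ¬ EInter n i j (j + 1) k ∧
  (Halving n i (j + 1) ∨ Halving n i k ∨ Halving n j k)

/-! With `n = 2m`, the chord from vertex `x` to vertex `x + u` has `u - 1` vertices on one
side and `n - 1 - u` on the other, so `e_{x,y}` is halving exactly when `y ≡ x + m (mod n)`.
Hence the almost-halving edge `e_{a,b}` joins `a` to `a + (m - 1)`, and an edge missing it has
both endpoints on the short arc `a + 1, …, a + (m - 2)` or both on the long arc
`a + m, …, a + (n - 1)`; otherwise it shares an endpoint with `e_{a,b}` or its endpoints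
interleave with those of `e_{a,b}`. If both edges of a pair miss `e_{a,b}`, the adjacent
vertices `j` and `j + 1` force all four endpoints onto the same arc. Each arc spans fewer than
`m` steps, so none of the three candidate witnesses is halving. -/
open Real

/-- Twice the signed area of the triangle `pqr`, positive when it is counterclockwise. -/
def orient (p q r : Pt) : ℝ :=
  (q.1 - p.1) * (r.2 - p.2) - (q.2 - p.2) * (r.1 - p.1)

lemma orient_swap (p q r : Pt) : orient p r q = -orient p q r := by
  unfold orient; ring

lemma orient_self_left (p r : Pt) : orient p p r = 0 := by
  simp [orient]

lemma orient_self_right (p q : Pt) : orient p q q = 0 := by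
  unfold orient; ring

lemma orient_self_ends (p q : Pt) : orient p q p = 0 := by
  simp [orient]

lemma mem_Icc_div_sub_of_mul_neg {x y : ℝ} (h : x * y < 0) :
    x / (x - y) ∈ Set.Icc (0 : ℝ) 1 := by
  rcases mul_neg_iff.mp h with ⟨hx, hy⟩ | ⟨hx, hy⟩
  · exact ⟨div_nonneg hx.le (by linarith), (div_le_one (by linarith)).2 (by linarith)⟩
  · exact ⟨div_nonneg_of_nonpos hx.le (by linarith),
      (div_le_one_of_neg (by linarith)).2 (by linarith)⟩

lemma segment_inter_nonempty_of_orient_mul_neg {p q r s : Pt}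
    (hpq : orient r s p * orient r s q < 0) (hrs : orient p q r * orient p q s < 0) :
    (segment ℝ p q ∩ segment ℝ r s).Nonempty := by
  have hd : orient r s p - orient r s q ≠ 0 := fun h => by
    rw [sub_eq_zero.1 h] at hpq; nlinarith
  have he : orient p q r - orient p q s ≠ 0 := fun h => by
    rw [sub_eq_zero.1 h] at hrs; nlinarith
  set t := orient r s p / (orient r s p - orient r s q)
  set w := orient p q r / (orient p q r - orient p q s)
  have hX : (1 - t) • p + t • q = (1 - w) • r + w • s := by
    obtain ⟨p1, p2⟩ := p
    obtain ⟨q1, q2⟩ := q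
    obtain ⟨r1, r2⟩ := r
    obtain ⟨s1, s2⟩ := s
    simp only [t, w, orient] at hd he ⊢
    ext <;>
      simp only [Prod.fst_add, Prod.snd_add, Prod.smul_fst, Prod.smul_snd, smul_eq_mul] <;>
      field_simp <;> ring
  rw [segment_eq_image, segment_eq_image]
  exact ⟨_, ⟨t, mem_Icc_div_sub_of_mul_neg hpq, rfl⟩,
    w, mem_Icc_div_sub_of_mul_neg hrs, hX.symm⟩

lemma pt_congr {n k l : ℕ} (h : k ≡ l [MOD n]) : pt n k = pt n l := by
  obtain ⟨t, ht⟩ := Nat.modEq_iff_dvd.1 h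
  rcases Nat.eq_zero_or_pos n with rfl | hn
  · rw [Nat.modEq_zero_iff.1 h]
  have harg : 2 * π * l / n = 2 * π * k / n + t * (2 * π) := by
    have : (l : ℝ) = k + n * t := by exact_mod_cast (sub_eq_iff_eq_add'.1 ht)
    rw [this]; field_simp
  simp only [pt, harg, cos_add_int_mul_two_pi, sin_add_int_mul_two_pi]

lemma pt_add_self (n k : ℕ) : pt n (k + n) = pt n k :=
  pt_congr Nat.add_modEq_right

lemma pt_eq_pt_iff {n k l : ℕ} (hn : 0 < n) : pt n k = pt n l ↔ k ≡ l [MOD n] := by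
  refine ⟨fun h => ?_, pt_congr⟩
  simp only [pt, Prod.mk.injEq, neg_inj] at h
  have hcos : cos (2 * π * k / n - 2 * π * l / n) = 1 := by
    rw [cos_sub, ← h.1, ← h.2, ← sq, ← sq, cos_sq_add_sin_sq]
  obtain ⟨t, ht⟩ := (cos_eq_one_iff _).1 hcos
  have htn : ((l : ℤ) - k : ℝ) = n * (-t) := by
    field_simp at ht
    push_cast; linear_combination ht
  exact Nat.modEq_iff_dvd.2 ⟨-t, by exact_mod_cast htn⟩

lemma orient_cos_sin (α β γ : ℝ) :
    orient (cos α, -sin α) (cos β, -sin β) (cos γ, -sin γ) =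
      -4 * sin ((α - β) / 2) * sin ((β - γ) / 2) * sin ((γ - α) / 2) := by
  have h : orient (cos α, -sin α) (cos β, -sin β) (cos γ, -sin γ) =
      sin (α - β) + sin (β - γ) + sin (γ - α) := by
    simp only [orient, sin_sub]; ring
  set x := (α - β) / 2
  set y := (β - γ) / 2
  rw [h, show (γ - α) / 2 = -(x + y) by ring, show α - β = 2 * x by ring,
    show β - γ = 2 * y by ring, show γ - α = -(2 * x + 2 * y) by ring]
  simp only [sin_neg, sin_add, sin_two_mul, cos_two_mul]
  linear_combination (-4 * sin x * cos x) * sin_sq_add_cos_sq y +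
    (-4 * sin y * cos y) * sin_sq_add_cos_sq x

lemma sin_pi_mul_div_pos {t s : ℝ} (ht : 0 < t) (hts : t < s) : 0 < sin (π * t / s) := by
  have hs := ht.trans hts
  apply sin_pos_of_pos_of_lt_pi (div_pos (mul_pos pi_pos ht) hs)
  rw [div_lt_iff₀ hs]
  nlinarith [pi_pos]

lemma orient_pt_neg {n x y z : ℕ} (hxy : x < y) (hyz : y < z) (hzx : z < x + n) :
    orient (pt n x) (pt n y) (pt n z) < 0 := by
  have hxy' : (x : ℝ) < y := by exact_mod_cast hxy
  have hyz' : (y : ℝ) < z := by exact_mod_cast hyz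
  have hzx' : (z : ℝ) < x + n := by exact_mod_cast hzx
  simp only [pt]
  rw [orient_cos_sin, show (2 * π * x / n - 2 * π * y / n) / 2 = -(π * (y - x) / n) by ring,
    show (2 * π * y / n - 2 * π * z / n) / 2 = -(π * (z - y) / n) by ring,
    show (2 * π * z / n - 2 * π * x / n) / 2 = π * (z - x) / n by ring, sin_neg, sin_neg]
  have h1 := sin_pi_mul_div_pos (s := n) (sub_pos.2 hxy') (by linarith)
  have h2 := sin_pi_mul_div_pos (s := n) (sub_pos.2 hyz') (by linarith)
  have h3 := sin_pi_mul_div_pos (s := n) (sub_pos.2 (hxy'.trans hyz')) (by linarith)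
  nlinarith [mul_pos (mul_pos h1 h2) h3]

lemma pt_segment_inter_nonempty {n x y z w : ℕ} (hxy : x < y) (hyz : y < z) (hzw : z < w)
    (hwx : w < x + n) :
    (segment ℝ (pt n x) (pt n z) ∩ segment ℝ (pt n y) (pt n w)).Nonempty := by
  apply segment_inter_nonempty_of_orient_mul_neg
  · have hx : orient (pt n y) (pt n w) (pt n x) < 0 := by
      rw [← pt_add_self n x]; exact orient_pt_neg (hyz.trans hzw) hwx (by omega)
    have hz : orient (pt n y) (pt n z) (pt n w) < 0 := orient_pt_neg hyz hzw (by omega)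
    rw [orient_swap (pt n y) (pt n z) (pt n w)]
    exact mul_neg_of_neg_of_pos hx (neg_pos.2 hz)
  · have hy : orient (pt n x) (pt n y) (pt n z) < 0 := orient_pt_neg hxy hyz (by omega)
    have hw : orient (pt n x) (pt n z) (pt n w) < 0 := orient_pt_neg (hxy.trans hyz) hzw hwx
    rw [orient_swap (pt n x) (pt n y) (pt n z)]
    exact mul_neg_of_pos_of_neg (neg_pos.2 hy) hw

lemma exists_lt_modEq_add {n : ℕ} (hn : 0 < n) (a c : ℕ) : ∃ v < n, c ≡ a + v [MOD n] := by
  have := NeZero.of_pos hn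
  refine ⟨((c : ZMod n) - a).val, ZMod.val_lt _, ?_⟩
  rw [← ZMod.natCast_eq_natCast_iff]
  push_cast
  simp

lemma pt_add_injOn {n : ℕ} (hn : 0 < n) (x : ℕ) :
    Set.InjOn (fun v => pt n (x + v)) (Finset.range n) := by
  intro v hv w hw h
  simp only [Finset.coe_range, Set.mem_Iio] at hv hw
  exact ((pt_eq_pt_iff hn).1 h).add_left_cancel' x |>.eq_of_lt_of_lt hv hw

lemma ngon_eq_image_add {n : ℕ} (hn : 0 < n) (x : ℕ) :
    ngon n = (Finset.range n).image (fun v => pt n (x + v)) := by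
  ext p
  simp only [ngon, Finset.mem_image, Finset.mem_range]
  constructor
  · rintro ⟨r, -, rfl⟩
    obtain ⟨v, hv, hrv⟩ := exists_lt_modEq_add hn x r
    exact ⟨v, hv, (pt_congr hrv).symm⟩
  · rintro ⟨v, -, rfl⟩
    exact ⟨(x + v) % n, Nat.mod_lt _ hn, pt_congr (Nat.mod_modEq _ _)⟩

lemma card_ngon {n : ℕ} (hn : 0 < n) : (ngon n).card = n := by
  rw [ngon_eq_image_add hn 0, Finset.card_image_of_injOn (pt_add_injOn hn 0), Finset.card_range]

lemma card_filter_ngon {n : ℕ} (hn : 0 < n) (x : ℕ) (P : Pt → Prop) [DecidablePred P] :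
    ((ngon n).filter P).card = ((Finset.range n).filter (fun v => P (pt n (x + v)))).card := by
  rw [ngon_eq_image_add hn x, Finset.filter_image, Finset.card_image_of_injOn
    ((pt_add_injOn hn x).mono (Finset.coe_subset.2 (Finset.filter_subset _ _)))]

lemma filter_orient_pos_eq_Ioo {n x u : ℕ} (hu : u < n) :
    (Finset.range n).filter (fun v => 0 < orient (pt n x) (pt n (x + u)) (pt n (x + v))) =
      Finset.Ioo 0 u := by
  ext v
  simp only [Finset.mem_filter, Finset.mem_range, Finset.mem_Ioo]
  constructor
  · rintro ⟨hv, hpos⟩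
    rcases Nat.eq_zero_or_pos u with rfl | hu0
    · simp [orient_self_left] at hpos
    rcases Nat.lt_trichotomy v u with hvu | rfl | huv
    · refine ⟨Nat.pos_of_ne_zero ?_, hvu⟩
      rintro rfl
      simp [orient_self_ends] at hpos
    · simp [orient_self_right] at hpos
    · exact absurd hpos (orient_pt_neg (by omega) (by omega) (by omega)).not_gt
  · rintro ⟨hv0, hvu⟩
    refine ⟨hvu.trans hu, ?_⟩
    rw [orient_swap (pt n x) (pt n (x + v)) (pt n (x + u))]
    exact neg_pos.2 (orient_pt_neg (by omega) (by omega) (by omega))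

lemma filter_orient_neg_eq_Ioo {n x u : ℕ} (hu0 : 0 < u) (hu : u < n) :
    (Finset.range n).filter (fun v => orient (pt n x) (pt n (x + u)) (pt n (x + v)) < 0) =
      Finset.Ioo u n := by
  ext v
  simp only [Finset.mem_filter, Finset.mem_range, Finset.mem_Ioo]
  constructor
  · rintro ⟨hv, hneg⟩
    refine ⟨?_, hv⟩
    by_contra! hvu
    rcases Nat.eq_zero_or_pos v with rfl | hv0
    · simp [orient_self_ends] at hneg
    rcases hvu.eq_or_lt with rfl | hvu
    · simp [orient_self_right] at hneg
    rw [orient_swap (pt n x) (pt n (x + v)) (pt n (x + u))] at hneg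
    exact (neg_neg_iff_pos.1 hneg).not_gt (orient_pt_neg (by omega) (by omega) (by omega))
  · rintro ⟨huv, hv⟩
    exact ⟨hv, orient_pt_neg (by omega) (by omega) (by omega)⟩

lemma Halving.modEq_add {n m x y : ℕ} (hm : n = 2 * m) (hm2 : 2 ≤ m) (h : Halving n x y) :
    y ≡ x + m [MOD n] := by
  have hn : 0 < n := by omega
  obtain ⟨u, hu, hyu⟩ := exists_lt_modEq_add hn x y
  obtain ⟨hpos, hneg⟩ :
      (n - 2) / 2 ≤ ((ngon n).filter fun r => 0 < orient (pt n x) (pt n y) r).card ∧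
      (n - 2) / 2 ≤ ((ngon n).filter fun r => orient (pt n x) (pt n y) r < 0).card := by
    rw [Halving, IsHalvingPts, card_ngon hn] at h
    exact h
  rw [pt_congr hyu, card_filter_ngon hn x, filter_orient_pos_eq_Ioo hu, Nat.card_Ioo] at hpos
  rw [pt_congr hyu, card_filter_ngon hn x, filter_orient_neg_eq_Ioo (by omega) hu,
    Nat.card_Ioo] at hneg
  rwa [show m = u by omega]

lemma offset_add_eq_or_eq_add {n a x y vx vy d : ℕ} (hx : x ≡ a + vx [MOD n])
    (hy : y ≡ a + vy [MOD n]) (h : y ≡ x + d [MOD n]) (hvx : vx < n) (hvy : vy < n)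
    (hd : d ≤ n) : vx + d = vy ∨ vx + d = vy + n := by
  have hmod : vx + d ≡ vy [MOD n] := by
    refine Nat.ModEq.add_left_cancel' a ?_
    rw [← add_assoc]
    exact ((hx.add_right d).symm.trans h.symm).trans hy
  rcases lt_or_ge (vx + d) n with hlt | hge
  · exact Or.inl (hmod.eq_of_lt_of_lt hlt hvy)
  · right
    have := ((Nat.sub_modulus_modEq_iff hge).2 hmod).eq_of_lt_of_lt (by omega) hvy
    omega

lemma offsets_on_same_arc_of_not_eInter {n a b c d u vc vd : ℕ} (hb : b ≡ a + u [MOD n])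
    (hc : c ≡ a + vc [MOD n]) (hd : d ≡ a + vd [MOD n]) (hvc : vc < n) (hvd : vd < n)
    (h : ¬ EInter n a b c d) :
    (0 < vc ∧ vc < u ∧ 0 < vd ∧ vd < u) ∨ (u < vc ∧ u < vd) := by
  rw [EInter, pt_congr hb, pt_congr hc, pt_congr hd] at h
  have endpoint : ∀ v, v = 0 ∨ v = u →
      pt n (a + v) ∈ segment ℝ (pt n a) (pt n (a + u)) := by
    rintro v (rfl | rfl)
    · exact left_mem_segment ℝ _ _
    · exact right_mem_segment ℝ _ _
  by_contra h'
  apply h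
  by_cases hc' : vc = 0 ∨ vc = u
  · exact ⟨_, endpoint vc hc', left_mem_segment ℝ _ _⟩
  by_cases hd' : vd = 0 ∨ vd = u
  · exact ⟨_, endpoint vd hd', right_mem_segment ℝ _ _⟩
  rcases lt_or_gt_of_ne (fun h => hc' (Or.inr h)) with hcu | hcu
  · exact pt_segment_inter_nonempty (by omega) (by omega) (by omega) (by omega)
  · rw [segment_symm ℝ (pt n (a + vc))]
    exact pt_segment_inter_nonempty (by omega) (by omega) (by omega) (by omega)

theorem almost_halving_intersects_pair_general (n : ℕ) (hn : 3 ≤ n) (heven : Even n)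
    (a b i j k : ℕ) (hah : Halving n a (b + 1)) (hp : HalvingPair n i j k) :
    EInter n a b i j ∨ EInter n a b (j + 1) k := by
  obtain ⟨m, hm⟩ := heven
  replace hm : n = 2 * m := by omega
  have hm2 : 2 ≤ m := by omega
  have hn0 : 0 < n := by omega
  have hb : b ≡ a + (m - 1) [MOD n] :=
    Nat.ModEq.add_right_cancel' 1 <| by
      rw [add_assoc, Nat.sub_add_cancel (by omega)]; exact hah.modEq_add hm hm2
  obtain ⟨vi, hvi_lt, hvi⟩ := exists_lt_modEq_add hn0 a i
  obtain ⟨vj, hvj_lt, hvj⟩ := exists_lt_modEq_add hn0 a j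
  obtain ⟨vj', hvj'_lt, hvj'⟩ := exists_lt_modEq_add hn0 a (j + 1)
  obtain ⟨vk, hvk_lt, hvk⟩ := exists_lt_modEq_add hn0 a k
  by_contra! ⟨hij, hjk⟩
  have arc_ij := offsets_on_same_arc_of_not_eInter hb hvi hvj hvi_lt hvj_lt hij
  have arc_jk := offsets_on_same_arc_of_not_eInter hb hvj' hvk hvj'_lt hvk_lt hjk
  have step := offset_add_eq_or_eq_add hvj hvj' .rfl hvj_lt hvj'_lt (by omega)
  obtain ⟨-, -, -, hw⟩ := hp
  rcases hw with hw | hw | hw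
  · have := offset_add_eq_or_eq_add hvi hvj' (hw.modEq_add hm hm2) hvi_lt hvj'_lt (by omega)
    omega
  · have := offset_add_eq_or_eq_add hvi hvk (hw.modEq_add hm hm2) hvi_lt hvk_lt (by omega)
    omega
  · have := offset_add_eq_or_eq_add hvj hvk (hw.modEq_add hm hm2) hvj_lt hvk_lt (by omega)
    omega

/-- For even `n`, every almost-halving edge intersects every halving pair. -/
theorem almost_halving_intersects_pair (n : ℕ) (hn : 3 ≤ n) (heven : Even n)
    (a b i j k : ℕ) (hab : pt n a ≠ pt n b)
    (hah : Halving n a (b + 1)) (hp : HalvingPair n i j k) :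
    EInter n a b i j ∨ EInter n a b (j + 1) k :=
  almost_halving_intersects_pair_general n hn heven a b i j k hah hp
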